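/- Fix θ > 0, an integer T ≥ 2, and for each integer t with 2 ≤ t ≤ T a real σ_t with 0 < σ_t ≤ 1. For each such t set κ_t = log((t² + 1)/√(2π)) / log(1 + θ/2). Then the sum over t = 2, …, T of ∫₀^∞ ( ∫_ℝ max(x, 0) dN(-√b·σ_t, σ_t²)(x) ) dΓ(κ_t, θ)(b) is at most Σ_{t=2}^{T} 1/(t² + 1), which in turn is at most π²/6. (This is the bound on the component R₂ of the Bayesian regret of RGP-UCB in Theorem 1.) -/

import Mathlib

open MeasureTheory ProbabilityTheory Real Filter Set
open scoped NNReal Topology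

/-!
Given `β = b`, the inner integral is `E[X⁺]` for `X ~ N(m, σ²)` with `m = -√b σ ≤ 0`. On `x > 0`
we have `x ≤ x - m`, and `(x - m) φ(x)` is the derivative of `-σ² φ(x)`, so
`E[X⁺] ≤ σ² φ(0) = σ e^{-b/2} / √(2π) ≤ e^{-b/2} / √(2π)`. Integrating over `β ~ Γ(κ, θ)` gives
the Laplace transform `E[e^{-β/2}] = (1 + θ/2)^{-κ}`, and `κ_t = log_{1+θ/2} ((t² + 1) / √(2π))`
is chosen exactly so that this is `√(2π) / (t² + 1)`. Finally `∑ 1/(t² + 1) ≤ ∑ 1/t² = π²/6`.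
-/

section Gaussian

variable {m : ℝ} {v : ℝ≥0}

lemma hasDerivAt_gaussianPDFReal (hv : v ≠ 0) (x : ℝ) :
    HasDerivAt (gaussianPDFReal m v) (-((x - m) / v) * gaussianPDFReal m v x) x := by
  have hv' : (v : ℝ) ≠ 0 := NNReal.coe_ne_zero.mpr hv
  have hexponent : HasDerivAt (fun y => -(y - m) ^ 2 / (2 * v)) (-((x - m) / v)) x := by
    refine ((((hasDerivAt_id x).sub_const m).pow 2).neg.div_const (2 * (v : ℝ))).congr_deriv ?_
    field_simp
    simp
  rw [gaussianPDFReal_def]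
  exact (hexponent.exp.const_mul _).congr_deriv (by ring)

lemma tendsto_gaussianPDFReal_atTop (hv : v ≠ 0) :
    Tendsto (gaussianPDFReal m v) atTop (𝓝 0) := by
  have hv' : (0 : ℝ) < v := by positivity
  have hexponent : Tendsto (fun x : ℝ => -(x - m) ^ 2 / (2 * v)) atTop atBot := by
    simp_rw [neg_div]
    exact tendsto_neg_atTop_atBot.comp (((tendsto_pow_atTop two_ne_zero).comp
      (tendsto_atTop_add_const_right _ (-m) tendsto_id)).atTop_div_const (by positivity))
  rw [gaussianPDFReal_def]
  simpa using (tendsto_exp_atBot.comp hexponent).const_mul (√(2 * π * v))⁻¹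

lemma hasDerivAt_neg_mul_gaussianPDFReal (hv : v ≠ 0) (x : ℝ) :
    HasDerivAt (fun x => -(v * gaussianPDFReal m v x)) ((x - m) * gaussianPDFReal m v x) x := by
  have hv' : (v : ℝ) ≠ 0 := NNReal.coe_ne_zero.mpr hv
  exact ((hasDerivAt_gaussianPDFReal hv x).const_mul (v : ℝ)).neg.congr_deriv (by field_simp)

lemma sub_mul_gaussianPDFReal_nonneg {a x : ℝ} (ha : m ≤ a) (hx : x ∈ Ioi a) :
    0 ≤ (x - m) * gaussianPDFReal m v x :=
  mul_nonneg (by linarith [mem_Ioi.mp hx]) (gaussianPDFReal_nonneg m v x)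

lemma tendsto_neg_mul_gaussianPDFReal_atTop (hv : v ≠ 0) :
    Tendsto (fun x => -(v * gaussianPDFReal m v x)) atTop (𝓝 0) := by
  simpa using ((tendsto_gaussianPDFReal_atTop hv).const_mul (v : ℝ)).neg

lemma integrableOn_Ioi_sub_mul_gaussianPDFReal (hv : v ≠ 0) {a : ℝ} (ha : m ≤ a) :
    IntegrableOn (fun x => (x - m) * gaussianPDFReal m v x) (Ioi a) :=
  integrableOn_Ioi_deriv_of_nonneg' (fun x _ => hasDerivAt_neg_mul_gaussianPDFReal hv x)
    (fun _ => sub_mul_gaussianPDFReal_nonneg ha)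
    (tendsto_neg_mul_gaussianPDFReal_atTop hv)

lemma integral_Ioi_sub_mul_gaussianPDFReal (hv : v ≠ 0) {a : ℝ} (ha : m ≤ a) :
    ∫ x in Ioi a, (x - m) * gaussianPDFReal m v x = v * gaussianPDFReal m v a := by
  rw [integral_Ioi_of_hasDerivAt_of_nonneg' (fun x _ => hasDerivAt_neg_mul_gaussianPDFReal hv x)
    (fun _ => sub_mul_gaussianPDFReal_nonneg ha)
    (tendsto_neg_mul_gaussianPDFReal_atTop hv)]
  ring

lemma integral_max_zero_gaussianReal_le (hv : v ≠ 0) (hm : m ≤ 0) :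
    ∫ x, max x 0 ∂gaussianReal m v ≤ v * gaussianPDFReal m v 0 := by
  rw [integral_gaussianReal_eq_integral_smul hv, ← integral_Ioi_sub_mul_gaussianPDFReal hv hm,
    ← integral_indicator measurableSet_Ioi]
  refine integral_mono_of_nonneg (ae_of_all _ fun x => ?_)
    ((integrableOn_Ioi_sub_mul_gaussianPDFReal hv hm).integrable_indicator measurableSet_Ioi)
    (ae_of_all _ fun x => ?_)
  · exact smul_nonneg (gaussianPDFReal_nonneg m v x) (le_max_right x 0)
  · dsimp only
    rcases lt_or_ge 0 x with hx | hx
    · rw [indicator_of_mem (mem_Ioi.mpr hx), max_eq_left hx.le, smul_eq_mul, mul_comm]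
      exact mul_le_mul_of_nonneg_right (by linarith) (gaussianPDFReal_nonneg m v x)
    · rw [indicator_of_notMem (notMem_Ioi.mpr hx), max_eq_right hx, smul_zero]

end Gaussian

lemma integral_max_zero_gaussianReal_neg_sqrt_mul_le {σ : ℝ} {v : ℝ≥0} (hv : (v : ℝ) = σ ^ 2)
    (hσ₀ : 0 < σ) (hσ₁ : σ ≤ 1) (b : ℝ) :
    ∫ x, max x 0 ∂gaussianReal (-√b * σ) v ≤ exp (-(b / 2)) / √(2 * π) := by
  have hv₀ : v ≠ 0 := by
    rw [← NNReal.coe_ne_zero, hv]; positivity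
  refine (integral_max_zero_gaussianReal_le hv₀
    (by nlinarith [sqrt_nonneg b] : -√b * σ ≤ 0)).trans ?_
  have hpdf : v * gaussianPDFReal (-√b * σ) v 0 = σ * exp (-(max b 0 / 2)) / √(2 * π) := by
    rw [gaussianPDFReal, hv, sqrt_mul (by positivity), sqrt_sq hσ₀.le,
      show (0 - -√b * σ) ^ 2 = √b ^ 2 * σ ^ 2 by ring, sq_sqrt']
    field_simp
  rw [hpdf]
  gcongr
  calc σ * exp (-(max b 0 / 2)) ≤ 1 * exp (-(max b 0 / 2)) := by gcongr
    _ ≤ exp (-(b / 2)) := by rw [one_mul]; gcongr; exact le_max_left b 0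

section Gamma

variable {a r s : ℝ}

lemma integral_gammaMeasure (ha : 0 < a) (hr : 0 < r) (f : ℝ → ℝ) :
    ∫ x, f x ∂gammaMeasure a r = ∫ x, gammaPDFReal a r x * f x := by
  have hmeas : Measurable (gammaPDF a r) := (measurable_gammaPDFReal a r).ennreal_ofReal
  rw [gammaMeasure, integral_withDensity_eq_integral_toReal_smul hmeas
    (ae_of_all _ fun _ => ENNReal.ofReal_lt_top)]
  congr with x
  rw [gammaPDF, ENNReal.toReal_ofReal (gammaPDFReal_nonneg ha hr x), smul_eq_mul]

lemma integral_gammaPDFReal_eq_one (ha : 0 < a) (hr : 0 < r) :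
    ∫ x, gammaPDFReal a r x = 1 := by
  have := isProbabilityMeasure_gammaMeasure ha hr
  simpa using (integral_gammaMeasure ha hr fun _ => 1).symm

lemma exp_neg_mul_mul_gammaPDFReal (hr : 0 ≤ r) (hrs : 0 < r + s) (x : ℝ) :
    exp (-(s * x)) * gammaPDFReal a r x = (r / (r + s)) ^ a * gammaPDFReal a (r + s) x := by
  have hpow : (r / (r + s)) ^ a * (r + s) ^ a = r ^ a := by
    rw [← mul_rpow (by positivity) hrs.le, div_mul_cancel₀ _ hrs.ne']
  unfold gammaPDFReal
  split_ifs
  · rw [← hpow, show -((r + s) * x) = -(s * x) + -(r * x) by ring, exp_add]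
    ring
  · simp

lemma integral_exp_neg_mul_gammaMeasure (ha : 0 < a) (hr : 0 < r) (hrs : 0 < r + s) :
    ∫ x, exp (-(s * x)) ∂gammaMeasure a r = (r / (r + s)) ^ a := by
  simp_rw [integral_gammaMeasure ha hr, mul_comm (gammaPDFReal a r _),
    exp_neg_mul_mul_gammaPDFReal hr.le hrs, integral_const_mul,
    integral_gammaPDFReal_eq_one ha hrs, mul_one]

lemma integrable_exp_neg_mul_gammaMeasure (ha : 0 < a) (hr : 0 < r) (hrs : 0 < r + s) :
    Integrable (fun x => exp (-(s * x))) (gammaMeasure a r) :=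
  .of_integral_ne_zero <| by rw [integral_exp_neg_mul_gammaMeasure ha hr hrs]; positivity

end Gamma

lemma integral_gammaMeasure_integral_max_zero_gaussianReal_le {θ σ c : ℝ} {v : ℝ≥0}
    (hθ : 0 < θ) (hv : (v : ℝ) = σ ^ 2) (hσ₀ : 0 < σ) (hσ₁ : σ ≤ 1) (hc : √(2 * π) < c) :
    ∫ b, (∫ x, max x 0 ∂gaussianReal (-√b * σ) v)
        ∂gammaMeasure (log (c / √(2 * π)) / log (1 + θ / 2)) (1 / θ) ≤ 1 / c := by
  set κ := log (c / √(2 * π)) / log (1 + θ / 2) with hκ_def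
  have hsqrt : 0 < √(2 * π) := by positivity
  have hq : 1 < 1 + θ / 2 := by linarith
  have hκ : 0 < κ := div_pos (log_pos ((one_lt_div hsqrt).mpr hc)) (log_pos hq)
  have hrate : 0 < 1 / θ := by positivity
  have hrs : 0 < 1 / θ + 1 / 2 := by positivity
  calc ∫ b, (∫ x, max x 0 ∂gaussianReal (-√b * σ) v) ∂gammaMeasure κ (1 / θ)
      ≤ ∫ b, exp (-(1 / 2 * b)) / √(2 * π) ∂gammaMeasure κ (1 / θ) := by
        refine integral_mono_of_nonneg
          (ae_of_all _ fun b => integral_nonneg fun x => le_max_right x 0)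
          ((integrable_exp_neg_mul_gammaMeasure hκ hrate hrs).div_const _)
          (ae_of_all _ fun b => ?_)
        simpa only [one_div_mul_eq_div] using
          integral_max_zero_gaussianReal_neg_sqrt_mul_le hv hσ₀ hσ₁ b
    _ = (1 / θ / (1 / θ + 1 / 2)) ^ κ / √(2 * π) := by
        rw [integral_div, integral_exp_neg_mul_gammaMeasure hκ hrate hrs]
    _ = 1 / c := by
        rw [show 1 / θ / (1 / θ + 1 / 2) = (1 + θ / 2)⁻¹ by field_simp, inv_rpow (by positivity),
          hκ_def, log_div_log, rpow_logb (by positivity) hq.ne' (div_pos (hsqrt.trans hc) hsqrt)]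
        field_simp

lemma sum_one_div_sq_add_one_le_pi_sq_div_six {s : Finset ℕ} (hs : 0 ∉ s) :
    ∑ t ∈ s, 1 / ((t : ℝ) ^ 2 + 1) ≤ π ^ 2 / 6 := by
  calc ∑ t ∈ s, 1 / ((t : ℝ) ^ 2 + 1)
      ≤ ∑ t ∈ s, 1 / (t : ℝ) ^ 2 := Finset.sum_le_sum fun t ht => by
        have : (0 : ℝ) < t := Nat.cast_pos.mpr (Nat.pos_of_ne_zero (ne_of_mem_of_not_mem ht hs))
        gcongr
        linarith
    _ ≤ π ^ 2 / 6 := sum_le_hasSum s (fun _ _ => by positivity) hasSum_zeta_two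

theorem rgpucb_R2_bound_general
    (θ : ℝ) (hθ : 0 < θ) (T : ℕ)
    (σ : ℕ → ℝ) (hσ : ∀ t ∈ Finset.Icc 2 T, 0 < σ t ∧ σ t ≤ 1) :
    (∑ t ∈ Finset.Icc 2 T,
        ∫ b, (∫ x, max x 0 ∂(gaussianReal (-Real.sqrt b * σ t) ⟨(σ t) ^ 2, sq_nonneg (σ t)⟩))
          ∂(gammaMeasure
              (Real.log (((t : ℝ) ^ 2 + 1) / Real.sqrt (2 * Real.pi)) / Real.log (1 + θ / 2))
              (1 / θ)))
      ≤ ∑ t ∈ Finset.Icc 2 T, 1 / ((t : ℝ) ^ 2 + 1)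
    ∧ (∑ t ∈ Finset.Icc 2 T, 1 / ((t : ℝ) ^ 2 + 1)) ≤ Real.pi ^ 2 / 6 := by
  have hsqrt : √(2 * π) < 5 := (sqrt_lt' (by norm_num)).mpr (by nlinarith [pi_lt_four])
  refine ⟨Finset.sum_le_sum fun t ht => ?_, sum_one_div_sq_add_one_le_pi_sq_div_six (by simp)⟩
  have ht₂ : (2 : ℝ) ≤ t := by exact_mod_cast (Finset.mem_Icc.mp ht).1
  obtain ⟨hσ₀, hσ₁⟩ := hσ t ht
  exact integral_gammaMeasure_integral_max_zero_gaussianReal_le hθ rfl hσ₀ hσ₁ (by nlinarith)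

theorem rgpucb_R2_bound
    (θ : ℝ) (hθ : 0 < θ) (T : ℕ) (hT : 2 ≤ T)
    (σ : ℕ → ℝ) (hσ : ∀ t ∈ Finset.Icc 2 T, 0 < σ t ∧ σ t ≤ 1) :
    (∑ t ∈ Finset.Icc 2 T,
        ∫ b, (∫ x, max x 0 ∂(gaussianReal (-Real.sqrt b * σ t) ⟨(σ t) ^ 2, sq_nonneg (σ t)⟩))
          ∂(gammaMeasure
              (Real.log (((t : ℝ) ^ 2 + 1) / Real.sqrt (2 * Real.pi)) / Real.log (1 + θ / 2))
              (1 / θ)))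
      ≤ ∑ t ∈ Finset.Icc 2 T, 1 / ((t : ℝ) ^ 2 + 1)
    ∧ (∑ t ∈ Finset.Icc 2 T, 1 / ((t : ℝ) ^ 2 + 1)) ≤ Real.pi ^ 2 / 6 :=
  rgpucb_R2_bound_general θ hθ T σ hσ
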